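/- Let n ≥ 2 and let p be an integer with 1 ≤ p ≤ n − 1 and gcd(p, n) = 1; let α = (1/n, (n−1)/n) and β = (p/n, (n−p)/n), and let W = {x ∈ (ℝ²)ⁿ : x₁ + ⋯ + xₙ = 0}. Then there exists a continuous D_{2n}-equivariant map f : V₂(ℝ³) → W ∖ ⋃ᵢ (W ∩ Ker x_i) if and only if there exists a continuous D_{2n}-equivariant map g : V₂(ℝ³) → W ∖ ⋃ᵢ (W ∩ Ker y_i). -/

import Mathlib

/- STATEMENT 8: For 1 ≤ p ≤ n−1 with gcd(p,n) = 1, a continuous D_{2n}-equivariant map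
V₂(ℝ³) → W ∖ ⋃ᵢ (W ∩ Ker x_i) exists iff a continuous D_{2n}-equivariant map
V₂(ℝ³) → W ∖ ⋃ᵢ (W ∩ Ker y_i) exists, where W = {x ∈ (ℝ²)ⁿ : Σ xᵢ = 0} and
y_i = x_{i+1} + ⋯ + x_{i+p}. -/

open Real

noncomputable section

/-- ℝ³. -/
abbrev V3 : Type := Fin 3 → ℝ

/-- The cross product on ℝ³. -/
def cross (u v : V3) : V3 :=
  ![u 1 * v 2 - u 2 * v 1, u 2 * v 0 - u 0 * v 2, u 0 * v 1 - u 1 * v 0]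

/-- Rotation of the tangent vector `y` at `x` counterclockwise through an angle `t`. -/
def dir (x y : V3) (t : ℝ) : V3 := Real.cos t • y + Real.sin t • cross x y

/-- The Stiefel manifold V₂(ℝ³) of orthonormal 2-frames in ℝ³. -/
def StP : Set (V3 × V3) :=
  {v | (∑ i, v.1 i * v.1 i = 1) ∧ (∑ i, v.2 i * v.2 i = 1) ∧ (∑ i, v.1 i * v.2 i = 0)}

/-- The free D_{2n}-action on V₂(ℝ³): `E·(x,y) = (x, cos(2π/n)y + sin(2π/n)(x×y))`,
`J·(x,y) = (−x, y)`. -/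
def stAct (n : ℕ) : DihedralGroup n → V3 × V3 → V3 × V3
  | DihedralGroup.r k => fun v => (v.1, dir v.1 v.2 (2 * Real.pi * (k.val : ℝ) / n))
  | DihedralGroup.sr k => fun v => (-v.1, dir v.1 v.2 (2 * Real.pi * (k.val : ℝ) / n))

/-- (ℝ²)ⁿ with coordinates indexed cyclically by ZMod n. -/
abbrev Mat (n : ℕ) : Type := ZMod n → ℝ × ℝ

/-- Index permutation realizing the dihedral action: `E = r 1` shifts cyclically,
`J = sr 0` reverses. -/
def dperm {n : ℕ} : DihedralGroup n → ZMod n → ZMod n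
  | DihedralGroup.r i => fun t => t + i
  | DihedralGroup.sr i => fun t => i - 1 - t

/-- The (left, linear) action of D_{2n} on (ℝ²)ⁿ. -/
def dAct {n : ℕ} (g : DihedralGroup n) (x : Mat n) : Mat n :=
  fun t => x (dperm g t)

/-- W ∖ ⋃ᵢ (W ∩ Ker x_i): points of W with all coordinates nonzero. -/
def MA (n : ℕ) [NeZero n] : Set (Mat n) :=
  {x | (∑ i, x i = 0) ∧ ∀ i : ZMod n, x i ≠ 0}

/-- W ∖ ⋃ᵢ (W ∩ Ker y_i): points of W with y_i(x) = x_{i+1} + ⋯ + x_{i+p} ≠ 0 for all i. -/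
def MB (n p : ℕ) [NeZero n] : Set (Mat n) :=
  {x | (∑ i, x i = 0) ∧
    ∀ i : ZMod n, (∑ s ∈ Finset.range p, x (i + (s : ZMod n) + 1)) ≠ 0}

/-- The "window sum" map: `(win n m a c x) t = ∑_{j<m} x (t + c + a j)`. -/
def win (n m : ℕ) (a c : ZMod n) (x : Mat n) : Mat n :=
  fun t => ∑ j ∈ Finset.range m, x (t + c + a * (j : ZMod n))

lemma zsum {n : ℕ} [NeZero n] (x : Mat n) (hx : ∑ i, x i = 0) (b : ZMod n) :
    ∑ t : ZMod n, x (t + b) = 0 := by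
  rw [← hx]
  exact Fintype.sum_equiv (Equiv.addRight b) _ _ (fun t => rfl)

lemma range_sum_cast {n : ℕ} [NeZero n] (f : ZMod n → ℝ × ℝ) :
    ∑ e ∈ Finset.range n, f (e : ZMod n) = ∑ t : ZMod n, f t := by
  refine Finset.sum_nbij' (fun e => (e : ZMod n)) (fun t => t.val) ?_ ?_ ?_ ?_ ?_
  · intro a _; exact Finset.mem_univ _
  · intro t _; exact Finset.mem_range.mpr (ZMod.val_lt t)
  · intro a ha; exact ZMod.val_cast_of_lt (Finset.mem_range.mp ha)
  · intro t _; exact ZMod.natCast_rightInverse t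
  · intro a _; rfl

lemma range_n_sum_zero {n : ℕ} [NeZero n] (x : Mat n) (hx : ∑ i, x i = 0) (b : ZMod n) :
    ∑ e ∈ Finset.range n, x (b + (e : ZMod n)) = 0 := by
  rw [range_sum_cast (fun t => x (b + t))]
  have := zsum x hx b
  rw [← this]
  exact Fintype.sum_congr _ _ (fun t => by rw [add_comm])

lemma sum_block {n : ℕ} [NeZero n] (x : Mat n) (hx : ∑ i, x i = 0) (k : ℕ) (a : ZMod n) :
    ∑ e ∈ Finset.range (n * k + 1), x (a + (e : ZMod n)) = x a := by
  induction k with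
  | zero => simp
  | succ k ih =>
    have h : n * (k + 1) + 1 = (n * k + 1) + n := by ring
    rw [h, Finset.sum_range_add, ih]
    have h2 : ∀ e : ℕ, x (a + ((n * k + 1 + e : ℕ) : ZMod n)) = x ((a + 1) + (e : ZMod n)) := by
      intro e
      congr 1
      push_cast [ZMod.natCast_self]
      ring
    rw [Finset.sum_congr rfl (fun e _ => h2 e), range_n_sum_zero x hx (a + 1), add_zero]

lemma grid {M : Type*} [AddCommMonoid M] (f : ℕ → M) (p q : ℕ) :
    ∑ e ∈ Finset.range (p * q), f e = ∑ j ∈ Finset.range q, ∑ s ∈ Finset.range p, f (p * j + s) := by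
  induction q with
  | zero => simp
  | succ q ih =>
    rw [show p * (q + 1) = p * q + p from by ring, Finset.sum_range_add, ih,
      Finset.sum_range_succ]

lemma win_equivariant {n : ℕ} (m : ℕ) (a c : ZMod n) (hm : 1 ≤ m)
    (h2c : 2 * c = a * (1 - (m : ZMod n))) (g : DihedralGroup n) (x : Mat n) :
    win n m a c (dAct g x) = dAct g (win n m a c x) := by
  cases g with
  | r i =>
    funext t
    simp only [win, dAct, dperm]
    exact Finset.sum_congr rfl fun j _ => congrArg x (by ring)
  | sr i =>
    funext t
    simp only [win, dAct, dperm]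
    conv_rhs => rw [← Finset.sum_range_reflect]
    refine Finset.sum_congr rfl fun j hj => congrArg x ?_
    have hj' : j < m := Finset.mem_range.mp hj
    have hj1 : j ≤ m - 1 := by omega
    have hcast : ((m - 1 - j : ℕ) : ZMod n) = (m : ZMod n) - 1 - (j : ZMod n) := by
      push_cast [Nat.cast_sub hj1, Nat.cast_sub hm]
      ring
    rw [hcast]
    linear_combination -h2c

lemma win_sum_zero {n : ℕ} [NeZero n] (m : ℕ) (a c : ZMod n) (x : Mat n)
    (hx : ∑ i, x i = 0) : ∑ t, win n m a c x t = 0 := by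
  simp only [win]
  rw [Finset.sum_comm]
  refine Finset.sum_eq_zero fun j _ => ?_
  have := zsum x hx (c + a * (j : ZMod n))
  rw [← this]
  exact Fintype.sum_congr _ _ (fun t => by rw [add_assoc])

lemma exists_c (n p : ℕ) [NeZero n] (hgcd : Nat.gcd p n = 1) :
    ∃ c : ZMod n, 2 * c = 1 - (p : ZMod n) := by
  rcases Nat.even_or_odd p with hp | hp
  · -- p even forces n odd
    have hnodd : Odd n := by
      rcases Nat.even_or_odd n with hn' | hn'
      · exfalso
        obtain ⟨a, ha⟩ := hp
        obtain ⟨b, hb⟩ := hn'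
        have h2 : 2 ∣ Nat.gcd p n := Nat.dvd_gcd ⟨a, by omega⟩ ⟨b, by omega⟩
        omega
      · exact hn'
    obtain ⟨t, ht⟩ := hnodd
    refine ⟨((t + 1 : ℕ) : ZMod n) * (1 - (p : ZMod n)), ?_⟩
    have h1 : ((2 * t + 1 : ℕ) : ZMod n) = 0 := by rw [← ht]; exact ZMod.natCast_self n
    push_cast at h1 ⊢
    linear_combination (1 - (p : ZMod n)) * h1
  · obtain ⟨m, hm⟩ := hp
    refine ⟨-((m : ℕ) : ZMod n), ?_⟩
    have hp' : (p : ZMod n) = 2 * (m : ZMod n) + 1 := by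
      rw [hm]; push_cast; ring
    rw [hp']; ring

lemma exists_q (n p : ℕ) (hgcd : Nat.gcd p n = 1) (hn : 2 ≤ n) :
    ∃ q k : ℕ, 1 ≤ q ∧ p * q = n * k + 1 := by
  obtain ⟨q, -, hq⟩ := Nat.exists_mul_mod_eq_one_of_coprime hgcd (by omega)
  refine ⟨q, p * q / n, ?_, ?_⟩
  · rcases Nat.eq_zero_or_pos q with h | h
    · subst h; simp at hq
    · exact h
  · have := Nat.div_add_mod (p * q) n
    omega

/-- Key counting identity: for `x` summing to zero with `p*q = n*k+1`,
the double window sum collapses to a single coordinate. -/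
lemma double_sum_eq {n : ℕ} [NeZero n] (x : Mat n) (hx : ∑ i, x i = 0)
    (p q k : ℕ) (hpqk : p * q = n * k + 1) (a : ZMod n) :
    ∑ s ∈ Finset.range p, ∑ j ∈ Finset.range q, x (a + (s : ZMod n) + (p : ZMod n) * (j : ZMod n))
      = x a := by
  have h1 := grid (fun e => x (a + (e : ZMod n))) p q
  rw [hpqk, sum_block x hx k a] at h1
  rw [Finset.sum_comm, h1]
  refine Finset.sum_congr rfl fun j _ => Finset.sum_congr rfl fun s _ => congrArg x ?_
  push_cast
  ring

theorem equivariant_map_exists_iff_for_isomorphic_arrangements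
    (n p : ℕ) [NeZero n] (hn : 2 ≤ n) (hp1 : 1 ≤ p) (hp2 : p ≤ n - 1)
    (hgcd : Nat.gcd p n = 1) :
    (∃ f : {v : V3 × V3 // v ∈ StP} → Mat n,
      Continuous f ∧
      (∀ (g : DihedralGroup n) (v w : {v : V3 × V3 // v ∈ StP}),
        (w : V3 × V3) = stAct n g (v : V3 × V3) → f w = dAct g (f v)) ∧
      (∀ v, f v ∈ MA n)) ↔
    (∃ f : {v : V3 × V3 // v ∈ StP} → Mat n,
      Continuous f ∧
      (∀ (g : DihedralGroup n) (v w : {v : V3 × V3 // v ∈ StP}),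
        (w : V3 × V3) = stAct n g (v : V3 × V3) → f w = dAct g (f v)) ∧
      (∀ v, f v ∈ MB n p)) := by
  obtain ⟨c, hc⟩ := exists_c n p hgcd
  obtain ⟨q, k, hq1, hpqk⟩ := exists_q n p hgcd hn
  have hpq : (p : ZMod n) * (q : ZMod n) = 1 := by
    have := congrArg (fun m : ℕ => (m : ZMod n)) hpqk
    push_cast [ZMod.natCast_self] at this
    simpa using this
  constructor
  · -- MA → MB : window of length q with step p, offset -c
    rintro ⟨f, hfc, hfe, hfm⟩
    have h2d : 2 * (-c) = (p : ZMod n) * (1 - (q : ZMod n)) := by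
      linear_combination -hc + hpq
    refine ⟨fun v => win n q (p : ZMod n) (-c) (f v), ?_, ?_, ?_⟩
    · refine continuous_pi fun t => ?_
      exact continuous_finset_sum _ fun j _ => (continuous_apply _).comp hfc
    · intro g v w hw
      show win n q (p : ZMod n) (-c) (f w) = dAct g (win n q (p : ZMod n) (-c) (f v))
      rw [hfe g v w hw, win_equivariant q _ _ hq1 h2d]
    · intro v
      obtain ⟨hsum, hnz⟩ := hfm v
      refine ⟨win_sum_zero q _ _ _ hsum, fun i => ?_⟩
      show (∑ s ∈ Finset.range p, win n q (p : ZMod n) (-c) (f v) (i + (s : ZMod n) + 1)) ≠ 0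
      have key := double_sum_eq (f v) hsum p q k hpqk (i + 1 + (-c))
      have heq : (∑ s ∈ Finset.range p, win n q (p : ZMod n) (-c) (f v) (i + (s : ZMod n) + 1))
          = f v (i + 1 + (-c)) := by
        rw [← key]
        refine Finset.sum_congr rfl fun s _ => ?_
        simp only [win]
        exact Finset.sum_congr rfl fun j _ => congrArg (f v) (by ring)
      rw [heq]
      exact hnz _
  · -- MB → MA : window of length p with step 1, offset c
    rintro ⟨f, hfc, hfe, hfm⟩
    have h2c : 2 * c = (1 : ZMod n) * (1 - (p : ZMod n)) := by
      rw [one_mul]; exact hc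
    refine ⟨fun v => win n p 1 c (f v), ?_, ?_, ?_⟩
    · refine continuous_pi fun t => ?_
      exact continuous_finset_sum _ fun j _ => (continuous_apply _).comp hfc
    · intro g v w hw
      show win n p 1 c (f w) = dAct g (win n p 1 c (f v))
      rw [hfe g v w hw, win_equivariant p _ _ hp1 h2c]
    · intro v
      obtain ⟨hsum, hnz⟩ := hfm v
      refine ⟨win_sum_zero p _ _ _ hsum, fun t => ?_⟩
      show win n p 1 c (f v) t ≠ 0
      have heq : win n p 1 c (f v) t
          = ∑ s ∈ Finset.range p, f v ((t + c - 1) + (s : ZMod n) + 1) := by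
        simp only [win]
        exact Finset.sum_congr rfl fun s _ => congrArg (f v) (by ring)
      rw [heq]
      exact hnz (t + c - 1)

end
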